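/- arXiv:2301.08324 — 5 statements merged into one kernel-verified Lean document; each statement's English description precedes it below -/
import Mathlib

section
/- Let m > 1, σ > 0, let ν be the Gaussian measure on ℝ with mean m and variance σ², and let S = [1, 2m−1]. Then the conditional first moment of the reciprocal admits the convergent series representation ∫_S (1/x) dν(x) = ∑_{j=0}^{∞} m^{−(2j+1)} ∫_S (x−m)^{2j} dν(x), where the series on the right converges; moreover all odd-index terms ∫_S (x−m)^{2j+1} dν(x) vanish by the symmetry of S about m. -/
open MeasureTheory ProbabilityTheory Real Set

/-!
On `S = [1, 2m - 1]` we have `|m - x| ≤ m - 1 < m`, so `1 / x = ∑ₖ (m - x)ᵏ / mᵏ⁺¹` is a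
geometric series dominated by the summable constants `(m - 1)ᵏ / mᵏ⁺¹`; dominated convergence
integrates it termwise. The reflection `x ↦ 2m - x` preserves both `ν` and `S` and negates
`(x - m)ᵏ` for odd `k`, so the odd terms vanish and only the even ones remain.
-/

theorem setIntegral_sub_pow_eq_zero_of_odd {μ : Measure ℝ} {c : ℝ} {S : Set ℝ}
    (hμ : μ.map (fun x => 2 * c - x) = μ) (hS : MeasurableSet S)
    (hSsymm : (fun x => 2 * c - x) ⁻¹' S = S) {n : ℕ} (hn : Odd n) :
    ∫ x in S, (x - c) ^ n ∂μ = 0 := by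
  have hreflect : ∫ x in S, (x - c) ^ n ∂μ = ∫ x in S, (2 * c - x - c) ^ n ∂μ := by
    conv_lhs => rw [← hμ]
    rw [setIntegral_map hS (by fun_prop) (by fun_prop), hSsymm]
  have hneg (x : ℝ) : (2 * c - x - c) ^ n = -(x - c) ^ n := by
    rw [show 2 * c - x - c = -(x - c) by ring, hn.neg_pow]
  simp only [hneg, integral_neg] at hreflect
  linarith

theorem hasSum_sub_pow_div_pow_succ {m x : ℝ} (hx : |m - x| < m) :
    HasSum (fun k : ℕ => (m - x) ^ k / m ^ (k + 1)) x⁻¹ := by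
  have hm : 0 < m := (abs_nonneg _).trans_lt hx
  have hx₀ : x ≠ 0 := by rintro rfl; simp [abs_of_pos hm] at hx
  have hr : |(m - x) / m| < 1 := by rwa [abs_div, abs_of_pos hm, div_lt_one hm]
  have hsum := (hasSum_geometric_of_abs_lt_one hr).mul_right m⁻¹
  rw [show (1 - (m - x) / m)⁻¹ * m⁻¹ = x⁻¹ by
    rw [one_sub_div hm.ne', sub_sub_cancel]; field_simp] at hsum
  have hterm : (fun k : ℕ => (m - x) ^ k / m ^ (k + 1)) = fun k => ((m - x) / m) ^ k * m⁻¹ := by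
    funext k
    rw [div_pow, pow_succ]
    field_simp
  rw [hterm]
  exact hsum

theorem hasSum_setIntegral_sub_pow_div_pow_succ {μ : Measure ℝ} [IsFiniteMeasure μ]
    {S : Set ℝ} {m r : ℝ} (hS : MeasurableSet S) (hr₀ : 0 ≤ r) (hr : r < m)
    (hSr : ∀ x ∈ S, |m - x| ≤ r) :
    HasSum (fun k : ℕ => ∫ x in S, (m - x) ^ k / m ^ (k + 1) ∂μ) (∫ x in S, x⁻¹ ∂μ) := by
  have hm : 0 < m := hr₀.trans_lt hr
  have hbound : Summable (fun k : ℕ => r ^ k / m ^ (k + 1)) := by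
    have h := hasSum_sub_pow_div_pow_succ (x := m - r) (by rwa [sub_sub_cancel, abs_of_nonneg hr₀])
    rw [sub_sub_cancel] at h
    exact h.summable
  refine hasSum_integral_of_dominated_convergence (fun k _ => r ^ k / m ^ (k + 1))
    (fun k => (by fun_prop : Continuous _).aestronglyMeasurable) (fun k => ?_)
    (ae_of_all _ fun _ => hbound) (integrable_const _) ?_
  all_goals filter_upwards [ae_restrict_mem hS] with x hx
  · rw [norm_div, norm_pow, norm_pow, Real.norm_eq_abs, Real.norm_of_nonneg hm.le]
    have := hSr x hx
    gcongr
  · exact hasSum_sub_pow_div_pow_succ ((hSr x hx).trans_lt hr)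

theorem integral_sub_pow_div_pow_succ (μ : Measure ℝ) (m : ℝ) (k : ℕ) :
    ∫ x, (m - x) ^ k / m ^ (k + 1) ∂μ = (-1) ^ k / m ^ (k + 1) * ∫ x, (x - m) ^ k ∂μ := by
  rw [← integral_const_mul]
  congr with x
  rw [← neg_sub x m, neg_pow]
  ring

theorem HasSum.even_of_odd_eq_zero {M : Type*} [AddCommMonoid M] [TopologicalSpace M]
    {f : ℕ → M} {a : M} (hf : HasSum f a) (hodd : ∀ j, f (2 * j + 1) = 0) :
    HasSum (fun j => f (2 * j)) a := by
  refine ((mul_right_injective₀ (two_ne_zero' ℕ)).hasSum_iff fun k hk => ?_).2 hf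
  obtain ⟨j, rfl | rfl⟩ := Nat.even_or_odd' k
  · exact absurd ⟨j, rfl⟩ hk
  · exact hodd j

theorem reciprocal_gaussian_first_moment_series_general (m σ : ℝ) (hm : 1 < m) :
    Summable (fun j : ℕ =>
        (1 / m ^ (2 * j + 1)) *
          ∫ x in Icc 1 (2 * m - 1), (x - m) ^ (2 * j)
            ∂(gaussianReal m ⟨σ ^ 2, sq_nonneg σ⟩)) ∧
    ((∫ x in Icc 1 (2 * m - 1), (1 / x) ∂(gaussianReal m ⟨σ ^ 2, sq_nonneg σ⟩)) =
      ∑' j : ℕ,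
        (1 / m ^ (2 * j + 1)) *
          ∫ x in Icc 1 (2 * m - 1), (x - m) ^ (2 * j)
            ∂(gaussianReal m ⟨σ ^ 2, sq_nonneg σ⟩)) ∧
    ∀ j : ℕ,
      (∫ x in Icc 1 (2 * m - 1), (x - m) ^ (2 * j + 1)
          ∂(gaussianReal m ⟨σ ^ 2, sq_nonneg σ⟩)) = 0 := by
  set ν : Measure ℝ := gaussianReal m ⟨σ ^ 2, sq_nonneg σ⟩
  have : IsProbabilityMeasure ν := instIsProbabilityMeasureGaussianReal _ _
  have hreflect : ν.map (fun x => 2 * m - x) = ν :=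
    (gaussianReal_map_const_sub (μ := m) (v := ⟨σ ^ 2, sq_nonneg σ⟩) (2 * m)).trans
      (by rw [two_mul, add_sub_cancel_right])
  have hodd (j : ℕ) : ∫ x in Icc 1 (2 * m - 1), (x - m) ^ (2 * j + 1) ∂ν = 0 :=
    setIntegral_sub_pow_eq_zero_of_odd hreflect measurableSet_Icc
      (by rw [preimage_const_sub_Icc]; ring_nf) (odd_two_mul_add_one j)
  have hseries := hasSum_setIntegral_sub_pow_div_pow_succ (μ := ν)
    (S := Icc 1 (2 * m - 1)) measurableSet_Icc (sub_nonneg.2 hm.le) (sub_one_lt m)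
    fun x hx => abs_le.2 ⟨by linarith [hx.2], by linarith [hx.1]⟩
  simp only [integral_sub_pow_div_pow_succ] at hseries
  have heven := hseries.even_of_odd_eq_zero fun j => by rw [hodd, mul_zero]
  simp only [(even_two_mul _).neg_one_pow, ← one_div] at heven
  exact ⟨heven.summable, heven.tsum_eq.symm, hodd⟩

/-- Series representation for the conditional first moment of the reciprocal of a Gaussian
restricted to `S = [1, 2m−1]`, together with summability and vanishing of odd terms. -/
theorem reciprocal_gaussian_first_moment_series (m σ : ℝ) (hm : 1 < m) (hσ : 0 < σ) :
    Summable (fun j : ℕ =>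
        (1 / m ^ (2 * j + 1)) *
          ∫ x in Icc 1 (2 * m - 1), (x - m) ^ (2 * j)
            ∂(gaussianReal m ⟨σ ^ 2, sq_nonneg σ⟩)) ∧
    ((∫ x in Icc 1 (2 * m - 1), (1 / x) ∂(gaussianReal m ⟨σ ^ 2, sq_nonneg σ⟩)) =
      ∑' j : ℕ,
        (1 / m ^ (2 * j + 1)) *
          ∫ x in Icc 1 (2 * m - 1), (x - m) ^ (2 * j)
            ∂(gaussianReal m ⟨σ ^ 2, sq_nonneg σ⟩)) ∧
    ∀ j : ℕ,
      (∫ x in Icc 1 (2 * m - 1), (x - m) ^ (2 * j + 1)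
          ∂(gaussianReal m ⟨σ ^ 2, sq_nonneg σ⟩)) = 0 :=
  reciprocal_gaussian_first_moment_series_general m σ hm
end

section
/- Let m > 1, σ > 0, let ν be the Gaussian measure on ℝ with mean m and variance σ², and let S = [1, 2m−1]. Then the conditional second moment of the reciprocal admits the convergent series representation ∫_S (1/x²) dν(x) = ∑_{j=0}^{∞} (2j+1) · m^{−(2j+2)} ∫_S (x−m)^{2j} dν(x), where the series on the right converges. -/
/-!
On `S = [m - a, m + a]` with `0 ≤ a < m` we have `|m - x| ≤ a < m`, so
`1 / x² = 1 / (m - (m - x))² = ∑ₖ (k + 1) (m - x)ᵏ / m^(k+2)`, and the terms are dominated by the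
constants `(k + 1) aᵏ / m^(k+2)`, which are summable; hence the series may be integrated term by
term against any finite measure. If the measure is invariant under the reflection `x ↦ 2m - x`,
which preserves `S` and negates `m - x`, the odd terms integrate to zero and only the even ones
remain. The Gaussian `gaussianReal m v` is such a measure.
-/

open MeasureTheory ProbabilityTheory Real Set

theorem hasSum_succ_mul_one_div_pow_mul_pow {m y : ℝ} (h : |y| < |m|) :
    HasSum (fun k : ℕ => ((k : ℝ) + 1) * (1 / m ^ (k + 2)) * y ^ k) (1 / (m - y) ^ 2) := by
  have hm : m ≠ 0 := abs_pos.1 ((abs_nonneg y).trans_lt h)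
  have hr : ‖y / m‖ < 1 := by
    rwa [norm_div, Real.norm_eq_abs, Real.norm_eq_abs, div_lt_one (abs_pos.2 hm)]
  have hval : 1 / (1 - y / m) ^ (1 + 1) * (1 / m ^ 2) = 1 / (m - y) ^ 2 := by
    rw [one_sub_div hm, div_pow, one_div_div, div_mul_div_comm, mul_one, mul_comm, pow_succ _ 1,
      pow_one]
    field_simp
  have hterm : (fun k : ℕ => ((k + 1).choose 1 : ℝ) * (y / m) ^ k * (1 / m ^ 2))
      = fun k : ℕ => ((k : ℝ) + 1) * (1 / m ^ (k + 2)) * y ^ k := by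
    funext k
    rw [Nat.choose_one_right, div_pow, pow_add]
    push_cast
    field_simp
  have hs := (hasSum_choose_mul_geometric_of_norm_lt_one 1 hr).mul_right (1 / m ^ 2)
  rwa [hval, hterm] at hs

theorem gaussianReal_map_two_mul_sub (μ : ℝ) (v : NNReal) :
    (gaussianReal μ v).map (fun x => 2 * μ - x) = gaussianReal μ v := by
  rw [gaussianReal_map_const_sub]
  congr 1
  ring

theorem setIntegral_Icc_sub_pow_eq_zero_of_odd {μ : Measure ℝ} {m : ℝ}
    (hμ : μ.map (fun x => 2 * m - x) = μ) (a : ℝ) {n : ℕ} (hn : Odd n) :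
    ∫ x in Icc (m - a) (m + a), (m - x) ^ n ∂μ = 0 := by
  have hS : (fun x : ℝ => 2 * m - x) ⁻¹' Icc (m - a) (m + a) = Icc (m - a) (m + a) := by
    ext x
    simp only [mem_preimage, mem_Icc]
    constructor <;> rintro ⟨h₁, h₂⟩ <;> constructor <;> linarith
  have h : ∫ x in Icc (m - a) (m + a), (m - x) ^ n ∂μ
      = -∫ x in Icc (m - a) (m + a), (m - x) ^ n ∂μ := by
    conv_lhs => rw [← hμ]
    rw [setIntegral_map measurableSet_Icc (by fun_prop) (by fun_prop), hS, ← integral_neg]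
    congr 1 with x
    rw [show m - (2 * m - x) = -(m - x) by ring, hn.neg_pow]
  linarith

theorem hasSum_setIntegral_one_div_sq {μ : Measure ℝ} [IsFiniteMeasure μ] {m a : ℝ}
    (ha : 0 ≤ a) (ham : a < m) :
    HasSum (fun k : ℕ => ((k : ℝ) + 1) * (1 / m ^ (k + 2)) *
        ∫ x in Icc (m - a) (m + a), (m - x) ^ k ∂μ)
      (∫ x in Icc (m - a) (m + a), 1 / x ^ 2 ∂μ) := by
  have hm : 0 < m := ha.trans_lt ham
  have hdist : ∀ x ∈ Icc (m - a) (m + a), |m - x| ≤ a := fun x hx =>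
    abs_le.2 ⟨by linarith [hx.2], by linarith [hx.1]⟩
  have hcoeff : ∀ k : ℕ, 0 ≤ ((k : ℝ) + 1) * (1 / m ^ (k + 2)) := fun k =>
    mul_nonneg (by positivity) (one_div_nonneg.2 (pow_nonneg hm.le _))
  simp_rw [← integral_const_mul]
  refine hasSum_integral_of_dominated_convergence
    (fun k _ => ((k : ℝ) + 1) * (1 / m ^ (k + 2)) * a ^ k) (fun k => by fun_prop)
    (fun k => ae_restrict_of_forall_mem measurableSet_Icc fun x hx => ?_)
    (Filter.Eventually.of_forall fun _ => ?_) (integrable_const _)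
    (ae_restrict_of_forall_mem measurableSet_Icc fun x hx => ?_)
  · rw [Real.norm_eq_abs, abs_mul, abs_of_nonneg (hcoeff k), abs_pow]
    gcongr
    exact hdist x hx
  · refine (hasSum_succ_mul_one_div_pow_mul_pow ?_).summable
    rwa [abs_of_nonneg ha, abs_of_pos hm]
  · simpa only [sub_sub_cancel] using hasSum_succ_mul_one_div_pow_mul_pow
      ((hdist x hx).trans_lt (ham.trans_le (le_abs_self m)))

theorem hasSum_setIntegral_one_div_sq_of_map_two_mul_sub {μ : Measure ℝ} [IsFiniteMeasure μ]
    {m a : ℝ} (hμ : μ.map (fun x => 2 * m - x) = μ) (ha : 0 ≤ a) (ham : a < m) :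
    HasSum (fun j : ℕ => (2 * (j : ℝ) + 1) * (1 / m ^ (2 * j + 2)) *
        ∫ x in Icc (m - a) (m + a), (x - m) ^ (2 * j) ∂μ)
      (∫ x in Icc (m - a) (m + a), 1 / x ^ 2 ∂μ) := by
  have h := hasSum_setIntegral_one_div_sq (μ := μ) ha ham
  have hodd : ∀ k : ℕ, k ∉ range (fun j : ℕ => 2 * j) →
      ((k : ℝ) + 1) * (1 / m ^ (k + 2)) *
      ∫ x in Icc (m - a) (m + a), (m - x) ^ k ∂μ = 0 := by
    intro k hk
    obtain ⟨j, rfl⟩ | hk_odd := Nat.even_or_odd k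
    · exact absurd ⟨j, two_mul j⟩ hk
    · rw [setIntegral_Icc_sub_pow_eq_zero_of_odd hμ a hk_odd, mul_zero]
  rw [← (mul_right_injective₀ two_ne_zero).hasSum_iff hodd] at h
  convert h using 2 with j
  simp only [Function.comp_apply, Nat.cast_mul, Nat.cast_ofNat]
  congr 2 with x
  rw [← neg_sub m x, (even_two_mul j).neg_pow]

theorem reciprocal_gaussian_second_moment_series_general (m σ : ℝ) (hm : 1 < m) :
    Summable (fun j : ℕ =>
        (2 * (j : ℝ) + 1) * (1 / m ^ (2 * j + 2)) *
          ∫ x in Icc 1 (2 * m - 1), (x - m) ^ (2 * j)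
            ∂(gaussianReal m ⟨σ ^ 2, sq_nonneg σ⟩)) ∧
    (∫ x in Icc 1 (2 * m - 1), (1 / x ^ 2) ∂(gaussianReal m ⟨σ ^ 2, sq_nonneg σ⟩)) =
      ∑' j : ℕ,
        (2 * (j : ℝ) + 1) * (1 / m ^ (2 * j + 2)) *
          ∫ x in Icc 1 (2 * m - 1), (x - m) ^ (2 * j)
            ∂(gaussianReal m ⟨σ ^ 2, sq_nonneg σ⟩) := by
  have hS : Icc 1 (2 * m - 1) = Icc (m - (m - 1)) (m + (m - 1)) := by
    congr 1 <;> ring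
  -- instance search does not unify through the literal `⟨σ ^ 2, _⟩`, so name it
  set v : NNReal := ⟨σ ^ 2, sq_nonneg σ⟩
  have h := hasSum_setIntegral_one_div_sq_of_map_two_mul_sub (gaussianReal_map_two_mul_sub m v)
    (sub_nonneg.2 hm.le) (sub_lt_self m one_pos)
  rw [← hS] at h
  exact ⟨h.summable, h.tsum_eq.symm⟩

/-- Series representation for the conditional second moment of the reciprocal of a Gaussian
restricted to `S = [1, 2m−1]`, together with summability of the series. -/
theorem reciprocal_gaussian_second_moment_series (m σ : ℝ) (hm : 1 < m) (hσ : 0 < σ) :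
    Summable (fun j : ℕ =>
        (2 * (j : ℝ) + 1) * (1 / m ^ (2 * j + 2)) *
          ∫ x in Icc 1 (2 * m - 1), (x - m) ^ (2 * j)
            ∂(gaussianReal m ⟨σ ^ 2, sq_nonneg σ⟩)) ∧
    (∫ x in Icc 1 (2 * m - 1), (1 / x ^ 2) ∂(gaussianReal m ⟨σ ^ 2, sq_nonneg σ⟩)) =
      ∑' j : ℕ,
        (2 * (j : ℝ) + 1) * (1 / m ^ (2 * j + 2)) *
          ∫ x in Icc 1 (2 * m - 1), (x - m) ^ (2 * j)
            ∂(gaussianReal m ⟨σ ^ 2, sq_nonneg σ⟩) :=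
  reciprocal_gaussian_second_moment_series_general m σ hm
end

section
/- Let m > 1, σ > 0, let ν be the Gaussian measure on ℝ with mean m and variance σ², and let S = [1, 2m−1]. Write E_S[g] = (∫_S g(x) dν(x)) / ν(S) for the conditional expectation given S. Then for every natural number k ≥ 0, the weighted tail of the series of conditional even moments satisfies ∑_{j=k+1}^{∞} (2j+1) · E_S[((x−m)/m)^{2j}] ≤ [ (2k+3) m²/(2m−1) + 2 m² (m−1)²/(2m−1)² ] · E_S[((x−m)/m)^{2k+2}]. -/
/-!
On `S = [1, 2m - 1]` the variable `t = ((x - m) / m)²` lies in `[0, q]` with `q = ((m - 1) / m)²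
< 1`, so `E_S[t^(j + k + 1)] ≤ q^j E_S[t^(k + 1)]`. The weighted tail is then dominated by
`∑ (2j + 2k + 3) q^j = 2q / (1 - q)² + (2k + 3) / (1 - q)`, and `1 - q = (2m - 1) / m²`.
-/

open MeasureTheory ProbabilityTheory Real Set

theorem hasSum_linear_mul_geometric {q : ℝ} (hq : ‖q‖ < 1) (a b : ℝ) :
    HasSum (fun j : ℕ => (a * j + b) * q ^ j) (a * q / (1 - q) ^ 2 + b / (1 - q)) := by
  have h := ((hasSum_coe_mul_geometric_of_norm_lt_one hq).mul_left a).add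
    ((hasSum_geometric_of_norm_lt_one hq).mul_left b)
  rw [← mul_div_assoc, ← div_eq_mul_inv] at h
  simpa only [add_mul, mul_assoc] using h

theorem tsum_linear_mul_le_of_le_geometric {q a b E : ℝ} (hq0 : 0 ≤ q) (hq1 : q < 1)
    (ha : 0 ≤ a) (hb : 0 ≤ b) {M : ℕ → ℝ} (hM0 : ∀ j, 0 ≤ M j) (hM : ∀ j, M j ≤ q ^ j * E) :
    ∑' j : ℕ, (a * j + b) * M j ≤ (a * q / (1 - q) ^ 2 + b / (1 - q)) * E := by
  have hdom : HasSum (fun j : ℕ => (a * j + b) * q ^ j * E)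
      ((a * q / (1 - q) ^ 2 + b / (1 - q)) * E) :=
    (hasSum_linear_mul_geometric (by rwa [norm_of_nonneg hq0]) a b).mul_right E
  have hle : ∀ j : ℕ, (a * j + b) * M j ≤ (a * j + b) * q ^ j * E := fun j => by
    rw [mul_assoc]; exact mul_le_mul_of_nonneg_left (hM j) (by positivity)
  have hsum : Summable fun j : ℕ => (a * j + b) * M j :=
    hdom.summable.of_nonneg_of_le (fun j => mul_nonneg (by positivity) (hM0 j)) hle
  exact hasSum_le hle hsum.hasSum hdom

theorem setIntegral_pow_add_le_pow_mul {α : Type*} [MeasurableSpace α] {μ : Measure α}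
    {s : Set α} (hs : MeasurableSet s) {g : α → ℝ} {q : ℝ} (hg0 : ∀ x ∈ s, 0 ≤ g x)
    (hgq : ∀ x ∈ s, g x ≤ q) {i : ℕ} (hint : IntegrableOn (fun x => g x ^ i) s μ) (j : ℕ) :
    ∫ x in s, g x ^ (j + i) ∂μ ≤ q ^ j * ∫ x in s, g x ^ i ∂μ := by
  rw [← integral_const_mul]
  refine integral_mono_of_nonneg ((ae_restrict_iff' hs).2 (.of_forall fun x hx => ?_))
    (hint.const_mul _) ((ae_restrict_iff' hs).2 (.of_forall fun x hx => ?_))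
  · exact pow_nonneg (hg0 x hx) _
  · simp only [pow_add]
    exact mul_le_mul_of_nonneg_right (pow_le_pow_left₀ (hg0 x hx) (hgq x hx) j)
      (pow_nonneg (hg0 x hx) _)

theorem sq_div_le_of_mem_Icc {m x : ℝ} (hm : 1 < m) (hx : x ∈ Icc 1 (2 * m - 1)) :
    ((x - m) / m) ^ 2 ≤ ((m - 1) / m) ^ 2 := by
  have hm0 : 0 ≤ m := by linarith
  exact sq_le_sq' (by rw [← neg_div]; gcongr; linarith [hx.1]) (div_le_div_of_nonneg_right (by linarith [hx.2]) hm0)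

theorem tsum_weighted_even_moments_Icc_le (μ : Measure ℝ) [IsFiniteMeasure μ] {m : ℝ}
    (hm : 1 < m) (k : ℕ) :
    (∑' j : ℕ, (2 * ((j : ℝ) + k + 1) + 1) *
        ((∫ x in Icc 1 (2 * m - 1), ((x - m) / m) ^ (2 * (j + k + 1)) ∂μ) /
          (μ (Icc 1 (2 * m - 1))).toReal)) ≤
      ((2 * (k : ℝ) + 3) * m ^ 2 / (2 * m - 1) + 2 * m ^ 2 * (m - 1) ^ 2 / (2 * m - 1) ^ 2) *
        ((∫ x in Icc 1 (2 * m - 1), ((x - m) / m) ^ (2 * k + 2) ∂μ) /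
          (μ (Icc 1 (2 * m - 1))).toReal) := by
  set S := Icc 1 (2 * m - 1)
  set q := ((m - 1) / m) ^ 2 with hq
  set Z := (μ S).toReal
  have hm0 : 0 < m := by linarith
  have hq1 : q < 1 := by
    rw [hq, div_pow, div_lt_one (by positivity)]; nlinarith
  have hmoment (j : ℕ) : (∫ x in S, ((x - m) / m) ^ (2 * (j + k + 1)) ∂μ) / Z ≤
      q ^ j * ((∫ x in S, ((x - m) / m) ^ (2 * k + 2) ∂μ) / Z) := by
    rw [← mul_div_assoc]
    refine div_le_div_of_nonneg_right ?_ ENNReal.toReal_nonneg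
    simpa only [pow_mul, ← mul_add_one, add_assoc] using
      setIntegral_pow_add_le_pow_mul measurableSet_Icc (fun x _ => sq_nonneg ((x - m) / m))
        (fun x hx => sq_div_le_of_mem_Icc hm hx)
        (Continuous.integrableOn_Icc (by fun_prop)) j (i := k + 1)
  have hconst : 2 * q / (1 - q) ^ 2 + (2 * k + 3) / (1 - q) =
      (2 * (k : ℝ) + 3) * m ^ 2 / (2 * m - 1) + 2 * m ^ 2 * (m - 1) ^ 2 / (2 * m - 1) ^ 2 := by
    have h1q : 1 - q = (2 * m - 1) / m ^ 2 := by rw [hq]; field_simp; ring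
    rw [h1q, hq]; field_simp; ring
  calc _ = ∑' j : ℕ, (2 * j + (2 * k + 3)) *
        ((∫ x in S, ((x - m) / m) ^ (2 * (j + k + 1)) ∂μ) / Z) := by congr! 2; ring
    _ ≤ _ := by
      rw [← hconst]
      refine tsum_linear_mul_le_of_le_geometric (sq_nonneg _) hq1 zero_le_two (by positivity)
        (fun j => div_nonneg (setIntegral_nonneg measurableSet_Icc fun x _ => ?_)
          ENNReal.toReal_nonneg) hmoment
      rw [pow_mul]; positivity

theorem weighted_tail_conditional_even_moments_le_general (m σ : ℝ) (hm : 1 < m) (k : ℕ) :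
    (∑' j : ℕ,
        (2 * ((j : ℝ) + k + 1) + 1) *
          ((∫ x in Icc 1 (2 * m - 1), ((x - m) / m) ^ (2 * (j + k + 1))
              ∂(gaussianReal m ⟨σ ^ 2, sq_nonneg σ⟩)) /
            ((gaussianReal m ⟨σ ^ 2, sq_nonneg σ⟩) (Icc 1 (2 * m - 1))).toReal)) ≤
      ((2 * (k : ℝ) + 3) * m ^ 2 / (2 * m - 1) +
          2 * m ^ 2 * (m - 1) ^ 2 / (2 * m - 1) ^ 2) *
        ((∫ x in Icc 1 (2 * m - 1), ((x - m) / m) ^ (2 * k + 2)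
            ∂(gaussianReal m ⟨σ ^ 2, sq_nonneg σ⟩)) /
          ((gaussianReal m ⟨σ ^ 2, sq_nonneg σ⟩) (Icc 1 (2 * m - 1))).toReal) := by
  have := instIsProbabilityMeasureGaussianReal m ⟨σ ^ 2, sq_nonneg σ⟩
  exact tsum_weighted_even_moments_Icc_le _ hm k

/-- Weighted tail bound for the series of conditional even moments of `(X−m)/m` given
`S = [1, 2m−1]`: `∑_{j=k+1}^∞ (2j+1) E_S[((x−m)/m)^{2j}]
  ≤ ((2k+3) m²/(2m−1) + 2 m² (m−1)²/(2m−1)²) E_S[((x−m)/m)^{2k+2}]`. -/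
theorem weighted_tail_conditional_even_moments_le (m σ : ℝ) (hm : 1 < m) (hσ : 0 < σ) (k : ℕ) :
    (∑' j : ℕ,
        (2 * ((j : ℝ) + k + 1) + 1) *
          ((∫ x in Icc 1 (2 * m - 1), ((x - m) / m) ^ (2 * (j + k + 1))
              ∂(gaussianReal m ⟨σ ^ 2, sq_nonneg σ⟩)) /
            ((gaussianReal m ⟨σ ^ 2, sq_nonneg σ⟩) (Icc 1 (2 * m - 1))).toReal)) ≤
      ((2 * (k : ℝ) + 3) * m ^ 2 / (2 * m - 1) +
          2 * m ^ 2 * (m - 1) ^ 2 / (2 * m - 1) ^ 2) *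
        ((∫ x in Icc 1 (2 * m - 1), ((x - m) / m) ^ (2 * k + 2)
            ∂(gaussianReal m ⟨σ ^ 2, sq_nonneg σ⟩)) /
          ((gaussianReal m ⟨σ ^ 2, sq_nonneg σ⟩) (Icc 1 (2 * m - 1))).toReal) :=
  weighted_tail_conditional_even_moments_le_general m σ hm k
end

section
/- Let σ > 0, let μ₁, μ₂ ∈ ℝ, and let f_{μ}(x) = (1/(σ√(2π))) exp(−(x−μ)²/(2σ²)) denote the Gaussian density with mean μ and variance σ². Then for every real α, ∫_ℝ f_{μ₁}(x)^α · f_{μ₂}(x)^{1−α} dx = exp( α(α−1)(μ₁−μ₂)² / (2σ²) ). (Consequently, for α > 1 the α-Rényi divergence between N(μ₁, σ²) and N(μ₂, σ²) equals α(μ₁−μ₂)²/(2σ²), which is the key computation showing that the Gaussian mechanism with noise variance Δ²/(2ρ) for a sensitivity-Δ query satisfies ρ-zero-concentrated differential privacy.) -/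
/-!
The integrand `f_{μ₁}^α f_{μ₂}^{1-α}` is itself a rescaled Gaussian: the normalising constants
combine to one constant, and completing the square in the exponent shows that it equals
`exp (α(α-1)(μ₁-μ₂)²/(2σ²))` times the Gaussian density with mean `αμ₁ + (1-α)μ₂`, whose
integral is `1`.
-/

open MeasureTheory ProbabilityTheory Real

lemma mul_sq_sub_add_one_sub_mul_sq_sub {R : Type*} [CommRing R] (α a b x : R) :
    α * (x - a) ^ 2 + (1 - α) * (x - b) ^ 2 =
      (x - (α * a + (1 - α) * b)) ^ 2 + α * (1 - α) * (a - b) ^ 2 := by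
  ring

lemma gaussianPDFReal_rpow_mul_rpow_one_sub (μ₁ μ₂ : ℝ) (v : NNReal) (α x : ℝ) :
    gaussianPDFReal μ₁ v x ^ α * gaussianPDFReal μ₂ v x ^ (1 - α) =
      exp (α * (α - 1) * (μ₁ - μ₂) ^ 2 / (2 * v)) *
        gaussianPDFReal (α * μ₁ + (1 - α) * μ₂) v x := by
  set c : ℝ := (√(2 * π * v))⁻¹
  have hc : 0 ≤ c := by positivity
  have hconst : c ^ α * c ^ (1 - α) = c := by
    rw [← rpow_add' hc (by norm_num), add_sub_cancel, rpow_one]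
  have hexponent : -(x - μ₁) ^ 2 / (2 * v) * α + -(x - μ₂) ^ 2 / (2 * v) * (1 - α) =
      α * (α - 1) * (μ₁ - μ₂) ^ 2 / (2 * v) +
        -(x - (α * μ₁ + (1 - α) * μ₂)) ^ 2 / (2 * v) := by
    linear_combination (-(2 * (v : ℝ))⁻¹) * mul_sq_sub_add_one_sub_mul_sq_sub α μ₁ μ₂ x
  simp only [gaussianPDFReal]
  rw [mul_rpow hc (exp_nonneg _), mul_rpow hc (exp_nonneg _), ← exp_mul, ← exp_mul,
    mul_mul_mul_comm, hconst, ← exp_add, hexponent, exp_add]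
  ring

lemma integral_gaussianPDFReal_rpow_mul_rpow_one_sub (μ₁ μ₂ : ℝ) {v : NNReal} (hv : v ≠ 0)
    (α : ℝ) :
    ∫ x, gaussianPDFReal μ₁ v x ^ α * gaussianPDFReal μ₂ v x ^ (1 - α) =
      exp (α * (α - 1) * (μ₁ - μ₂) ^ 2 / (2 * v)) := by
  simp_rw [gaussianPDFReal_rpow_mul_rpow_one_sub]
  rw [integral_const_mul, integral_gaussianPDFReal_eq_one _ hv, mul_one]

/-- The Rényi integral of two Gaussian densities with common variance `σ²`:
`∫ f_{μ₁}^α f_{μ₂}^{1−α} = exp(α(α−1)(μ₁−μ₂)²/(2σ²))`, the key computation behind the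
zCDP guarantee of the Gaussian mechanism. -/
theorem gaussian_renyi_integral (σ : ℝ) (hσ : 0 < σ) (μ₁ μ₂ : ℝ) (α : ℝ) :
    ∫ x : ℝ, (gaussianPDFReal μ₁ ⟨σ ^ 2, sq_nonneg σ⟩ x) ^ α *
        (gaussianPDFReal μ₂ ⟨σ ^ 2, sq_nonneg σ⟩ x) ^ (1 - α) =
      Real.exp (α * (α - 1) * (μ₁ - μ₂) ^ 2 / (2 * σ ^ 2)) := by
  have hv : (⟨σ ^ 2, sq_nonneg σ⟩ : NNReal) ≠ 0 :=
    NNReal.coe_ne_zero.mp (pow_ne_zero 2 hσ.ne')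
  exact integral_gaussianPDFReal_rpow_mul_rpow_one_sub μ₁ μ₂ hv α
end

section
/- Let n ≥ 2 be a natural number and let k be a natural number with k + 1 ≤ n. Then, with real division, | (k/n)(1 − k/n) − ((k+1)/n)(1 − (k+1)/n) | ≤ (1/n)(1 − 1/n). -/
/-- Sensitivity of the per-stratum plug-in variance term `p̂(1−p̂)` when the count changes by
one record: for `p̂ = k/n` with `k + 1 ≤ n` and `n ≥ 2`,
`|(k/n)(1−k/n) − ((k+1)/n)(1−(k+1)/n)| ≤ (1/n)(1−1/n)`. -/
theorem variance_term_sensitivity (n k : ℕ) (hn : 2 ≤ n) (hk : k + 1 ≤ n) :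
    |((k : ℝ) / n) * (1 - (k : ℝ) / n) -
        (((k : ℝ) + 1) / n) * (1 - ((k : ℝ) + 1) / n)| ≤
      (1 / (n : ℝ)) * (1 - 1 / (n : ℝ)) := by
  have hn0 : (0 : ℝ) < n := by positivity
  have hkr : (k : ℝ) + 1 ≤ n := by exact_mod_cast hk
  have hnr : (2 : ℝ) ≤ n := by exact_mod_cast hn
  have hk0 : (0 : ℝ) ≤ k := Nat.cast_nonneg k
  have key : ((k : ℝ) / n) * (1 - (k : ℝ) / n) -
      (((k : ℝ) + 1) / n) * (1 - ((k : ℝ) + 1) / n)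
      = (1 / n) * ((2 * k + 1) / n - 1) := by
    field_simp; ring
  rw [key, abs_mul, abs_of_nonneg (by positivity : (0:ℝ) ≤ 1 / (n:ℝ))]
  apply mul_le_mul_of_nonneg_left _ (by positivity)
  rw [abs_le]
  constructor
  · have h2 : (1:ℝ)/n ≤ (2 * k + 1) / n := by gcongr; linarith
    linarith
  · have : (2 * (k:ℝ) + 1) / n ≤ 2 - 1/n := by
      rw [div_le_iff₀ hn0]
      have : (2 - 1/(n:ℝ)) * n = 2*n - 1 := by field_simp
      rw [this]; linarith
    linarith
end
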